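/- Suppose ψ is an n-qubit stabilizer state and x, y ∈ {0,1}^n satisfy ⟨x|ψ⟩ ≠ 0 and ⟨y|ψ⟩ ≠ 0. Then there exists a Pauli operator P in the stabilizer group of ψ such that P|x⟩ is proportional to |y⟩. -/

import Mathlib

/-!
Let `U` be the span of the differences of points of the support of `ψ`. A stabilizer
`i^α (-1)^β X^a Z^b` preserves the support, so `a ∈ U`. Two stabilizers with the same `a` have
`Z`-parts differing by a vector of `U^⊥`, and stabilizers with the same `a` and `b` have the same
phase. Hence at most `|U^⊥|` stabilizers share an `X`-part, and since `|U| |U^⊥| = 2^n` is the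
number of stabilizers, every `a ∈ U` occurs, in particular `a = y - x`.
-/

open Matrix

/-- The `n`-qubit operator `X^a Z^b`, acting on computational basis states by
`X^a Z^b |y⟩ = (-1)^{b·y} |y + a⟩`. -/
def XZ {n : ℕ} (a b : Fin n → ZMod 2) :
    Matrix (Fin n → ZMod 2) (Fin n → ZMod 2) ℂ :=
  Matrix.of fun x y => if x = y + a then (-1 : ℂ) ^ (b ⬝ᵥ y).val else 0

/-- A general `n`-qubit Pauli operator `i^α (-1)^β X^a Z^b`. -/
noncomputable def PauliOp {n : ℕ} (α β : ZMod 2) (a b : Fin n → ZMod 2) :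
    Matrix (Fin n → ZMod 2) (Fin n → ZMod 2) ℂ :=
  (Complex.I ^ α.val * (-1 : ℂ) ^ β.val) • XZ a b

/-- Parameters `(α, β, a, b)` of a Pauli operator. -/
abbrev PauliParam (n : ℕ) :=
  ZMod 2 × ZMod 2 × (Fin n → ZMod 2) × (Fin n → ZMod 2)

noncomputable def PauliOp' {n : ℕ} (q : PauliParam n) :
    Matrix (Fin n → ZMod 2) (Fin n → ZMod 2) ℂ :=
  PauliOp q.1 q.2.1 q.2.2.1 q.2.2.2

/-- The computational basis state `|x⟩` as an amplitude vector. -/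
def ket {n : ℕ} (x : Fin n → ZMod 2) : (Fin n → ZMod 2) → ℂ :=
  Pi.single x 1

open Finset

theorem Finset.image_eq_of_card_fiber_le {α β : Type*} [DecidableEq β] {s : Finset α}
    {t : Finset β} {f : α → β} {m : ℕ} (hm : 0 < m) (hf : ∀ a ∈ s, f a ∈ t)
    (hfiber : ∀ b ∈ t, #{a ∈ s | f a = b} ≤ m) (hcard : #t * m ≤ #s) : s.image f = t := by
  have hsub : s.image f ⊆ t := image_subset_iff.2 hf
  by_contra hne
  have hlt : #(s.image f) < #t := card_lt_card (ssubset_of_subset_of_ne hsub hne)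
  have hle : #s ≤ m * #(s.image f) := card_le_mul_card_image s m fun b hb ↦ hfiber b (hsub hb)
  nlinarith

theorem neg_one_pow_val_add {R : Type*} [Ring R] (s t : ZMod 2) :
    (-1 : R) ^ (s + t).val = (-1) ^ s.val * (-1) ^ t.val := by
  rw [ZMod.val_add, ← neg_one_pow_eq_pow_mod_two, pow_add]

theorem neg_one_pow_val_injective {R : Type*} [Monoid R] [HasDistribNeg R] (h : (-1 : R) ≠ 1) :
    Function.Injective fun t : ZMod 2 ↦ (-1 : R) ^ t.val := by
  intro s t hst
  fin_cases s <;> fin_cases t <;> simp_all [ZMod.val, eq_comm] <;> rfl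

section Orthogonal

variable {K ι : Type*} [Field K] [Fintype ι] [DecidableEq ι]

def dotOrthogonal (U : Submodule K (ι → K)) : Submodule K (ι → K) :=
  U.dualAnnihilator.comap (dotProductEquiv K ι).toLinearMap

theorem card_mul_card_dotOrthogonal (U : Submodule K (ι → K)) :
    Nat.card U * Nat.card (dotOrthogonal U) = Nat.card (ι → K) := by
  have hfinrank : Module.finrank K (dotOrthogonal U) = Module.finrank K U.dualAnnihilator := by
    rw [dotOrthogonal, Submodule.comap_equiv_eq_map_symm]
    exact ((dotProductEquiv K ι).symm.submoduleMap _).finrank_eq.symm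
  rw [Module.natCard_eq_pow_finrank (K := K) (V := U),
    Module.natCard_eq_pow_finrank (K := K) (V := dotOrthogonal U),
    Module.natCard_eq_pow_finrank (K := K) (V := ι → K), ← pow_add, hfinrank,
    Subspace.finrank_add_finrank_dualAnnihilator_eq]

theorem mem_dotOrthogonal_span {s : Set (ι → K)} {v : ι → K} :
    v ∈ dotOrthogonal (Submodule.span K s) ↔ ∀ u ∈ s, v ⬝ᵥ u = 0 := by
  simpa [dotOrthogonal, Submodule.mem_dualAnnihilator, SetLike.le_def, Set.subset_def] using
    Submodule.span_le (s := s) (p := LinearMap.ker (dotProductEquiv K ι v))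

end Orthogonal

section Pauli

variable {n : ℕ}

theorem XZ_mulVec_apply (a b : Fin n → ZMod 2) (ψ : (Fin n → ZMod 2) → ℂ) (z : Fin n → ZMod 2) :
    (XZ a b *ᵥ ψ) z = (-1) ^ (b ⬝ᵥ (z - a)).val * ψ (z - a) := by
  simp only [XZ, mulVec, dotProduct, of_apply, ite_mul, zero_mul, ← sub_eq_iff_eq_add,
    Finset.sum_ite_eq, Finset.mem_univ, if_true]

def pauliPhase (α β : ZMod 2) : ℂ := Complex.I ^ α.val * (-1) ^ β.val

theorem pauliPhase_ne_zero (α β : ZMod 2) : pauliPhase α β ≠ 0 :=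
  mul_ne_zero (pow_ne_zero _ Complex.I_ne_zero) (pow_ne_zero _ (by norm_num))

theorem pauliPhase_inj {α β α' β' : ZMod 2} :
    pauliPhase α β = pauliPhase α' β' ↔ α = α' ∧ β = β' := by
  refine ⟨fun h ↦ ?_, fun ⟨hα, hβ⟩ ↦ hα ▸ hβ ▸ rfl⟩
  fin_cases α <;> fin_cases β <;> fin_cases α' <;> fin_cases β' <;>
    simp_all [pauliPhase, ZMod.val, Complex.ext_iff] <;> norm_num at * <;> and_intros <;> rfl

theorem pauliOp_mulVec_apply (α β : ZMod 2) (a b : Fin n → ZMod 2) (ψ : (Fin n → ZMod 2) → ℂ)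
    (z : Fin n → ZMod 2) :
    (PauliOp α β a b *ᵥ ψ) z = pauliPhase α β * ((-1) ^ (b ⬝ᵥ (z - a)).val * ψ (z - a)) := by
  rw [PauliOp, smul_mulVec, Pi.smul_apply, XZ_mulVec_apply, smul_eq_mul, pauliPhase]

theorem pauliOp_mulVec_ket (α β : ZMod 2) (a b x : Fin n → ZMod 2) :
    PauliOp α β a b *ᵥ ket x = (pauliPhase α β * (-1) ^ (b ⬝ᵥ x).val) • ket (x + a) := by
  ext z
  rw [pauliOp_mulVec_apply]
  by_cases hz : z = x + a
  · simp [hz, ket]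
  · have : z - a ≠ x := fun h ↦ hz (sub_eq_iff_eq_add.1 h)
    simp [hz, ket, this]

open Classical in
noncomputable def stabilizerParams (ψ : (Fin n → ZMod 2) → ℂ) : Finset (PauliParam n) :=
  Finset.univ.filter fun q ↦ PauliOp' q *ᵥ ψ = ψ

theorem mem_stabilizerParams {ψ : (Fin n → ZMod 2) → ℂ} {α β : ZMod 2} {a b : Fin n → ZMod 2} :
    (α, β, a, b) ∈ stabilizerParams ψ ↔ PauliOp α β a b *ᵥ ψ = ψ := by
  rw [stabilizerParams, Finset.mem_filter]
  exact and_iff_right (Finset.mem_univ _)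

section Stabilizer

variable {ψ : (Fin n → ZMod 2) → ℂ} {α β α' β' : ZMod 2} {a b b' x : Fin n → ZMod 2}

theorem apply_eq_of_pauliOp_mulVec_eq (h : PauliOp α β a b *ᵥ ψ = ψ) (z : Fin n → ZMod 2) :
    ψ z = pauliPhase α β * ((-1) ^ (b ⬝ᵥ (z - a)).val * ψ (z - a)) := by
  rw [← pauliOp_mulVec_apply, h]

theorem mem_vectorSpan_support_of_pauliOp_mulVec_eq (h : PauliOp α β a b *ᵥ ψ = ψ)
    (hx : ψ x ≠ 0) : a ∈ vectorSpan (ZMod 2) (Function.support ψ) := by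
  have hxa : ψ (x + a) ≠ 0 := by
    rw [apply_eq_of_pauliOp_mulVec_eq h, add_sub_cancel_right]
    exact mul_ne_zero (pauliPhase_ne_zero α β) (mul_ne_zero (pow_ne_zero _ (by norm_num)) hx)
  simpa using vsub_mem_vectorSpan (ZMod 2) hxa (Function.mem_support.2 hx)

theorem pauliPhase_mul_eq_of_pauliOp_mulVec_eq (h : PauliOp α β a b *ᵥ ψ = ψ)
    (h' : PauliOp α' β' a b' *ᵥ ψ = ψ) {w : Fin n → ZMod 2} (hw : ψ w ≠ 0) :
    pauliPhase α β * (-1) ^ ((b - b') ⬝ᵥ w).val = pauliPhase α' β' := by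
  have hsplit : b ⬝ᵥ w = (b - b') ⬝ᵥ w + b' ⬝ᵥ w := by rw [sub_dotProduct, sub_add_cancel]
  have heq := (apply_eq_of_pauliOp_mulVec_eq h (w + a)).symm.trans
    (apply_eq_of_pauliOp_mulVec_eq h' (w + a))
  rw [add_sub_cancel_right, hsplit, neg_one_pow_val_add] at heq
  refine mul_right_cancel₀ (b := (-1 : ℂ) ^ (b' ⬝ᵥ w).val * ψ w)
    (mul_ne_zero (pow_ne_zero _ (by norm_num)) hw) ?_
  linear_combination heq

theorem sub_mem_dotOrthogonal_of_pauliOp_mulVec_eq (h : PauliOp α β a b *ᵥ ψ = ψ)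
    (h' : PauliOp α' β' a b' *ᵥ ψ = ψ) :
    b - b' ∈ dotOrthogonal (vectorSpan (ZMod 2) (Function.support ψ)) := by
  rw [vectorSpan_def, mem_dotOrthogonal_span]
  rintro _ ⟨w, hw, w', hw', rfl⟩
  change (b - b') ⬝ᵥ (w - w') = 0
  rw [dotProduct_sub, sub_eq_zero]
  apply neg_one_pow_val_injective (R := ℂ) (by norm_num)
  exact mul_left_cancel₀ (pauliPhase_ne_zero α β)
    ((pauliPhase_mul_eq_of_pauliOp_mulVec_eq h h' hw).trans
      (pauliPhase_mul_eq_of_pauliOp_mulVec_eq h h' hw').symm)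

theorem pauliPhase_eq_of_pauliOp_mulVec_eq (h : PauliOp α β a b *ᵥ ψ = ψ)
    (h' : PauliOp α' β' a b *ᵥ ψ = ψ) (hx : ψ x ≠ 0) : pauliPhase α β = pauliPhase α' β' := by
  simpa using pauliPhase_mul_eq_of_pauliOp_mulVec_eq h h' hx

theorem card_filter_stabilizerParams_le (hx : ψ x ≠ 0) (a : Fin n → ZMod 2) :
    #{q ∈ stabilizerParams ψ | q.2.2.1 = a} ≤
      Nat.card (dotOrthogonal (vectorSpan (ZMod 2) (Function.support ψ))) := by
  classical
  set F := {q ∈ stabilizerParams ψ | q.2.2.1 = a}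
  have hF : ∀ q ∈ F, PauliOp q.1 q.2.1 a q.2.2.2 *ᵥ ψ = ψ := by
    intro q hq
    obtain ⟨hq, ha⟩ := Finset.mem_filter.1 hq
    exact ha ▸ mem_stabilizerParams.1 hq
  obtain hempty | ⟨q₀, hq₀⟩ := F.eq_empty_or_nonempty
  · simp [hempty]
  rw [← SetLike.coe_sort_coe, Nat.card_eq_card_toFinset]
  refine card_le_card_of_injOn (fun q ↦ q.2.2.2 - q₀.2.2.2) (fun q hq ↦ ?_)
    (fun q hq q' hq' hqq' ↦ ?_)
  · exact Set.mem_toFinset.2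
      (sub_mem_dotOrthogonal_of_pauliOp_mulVec_eq (hF q hq) (hF q₀ hq₀))
  · have hq := Finset.mem_coe.1 hq
    have hq' := Finset.mem_coe.1 hq'
    have hb : q.2.2.2 = q'.2.2.2 := sub_left_injective hqq'
    obtain ⟨hα, hβ⟩ :=
      pauliPhase_inj.1 (pauliPhase_eq_of_pauliOp_mulVec_eq (hF q hq) (hb ▸ hF q' hq') hx)
    have ha : q.2.2.1 = q'.2.2.1 :=
      (Finset.mem_filter.1 hq).2.trans (Finset.mem_filter.1 hq').2.symm
    exact Prod.ext hα (Prod.ext hβ (Prod.ext ha hb))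

end Stabilizer

theorem exists_mem_stabilizerParams_of_mem_vectorSpan {ψ : (Fin n → ZMod 2) → ℂ}
    (hcard : #(stabilizerParams ψ) = 2 ^ n) {x : Fin n → ZMod 2} (hx : ψ x ≠ 0)
    {a : Fin n → ZMod 2} (ha : a ∈ vectorSpan (ZMod 2) (Function.support ψ)) :
    ∃ q ∈ stabilizerParams ψ, q.2.2.1 = a := by
  classical
  set U := vectorSpan (ZMod 2) (Function.support ψ)
  have himage : (stabilizerParams ψ).image (·.2.2.1) = (U : Set (Fin n → ZMod 2)).toFinset := by
    refine Finset.image_eq_of_card_fiber_le Nat.card_pos (fun q hq ↦ ?_)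
      (fun a _ ↦ card_filter_stabilizerParams_le hx a) ?_
    · exact Set.mem_toFinset.2
        (mem_vectorSpan_support_of_pauliOp_mulVec_eq (mem_stabilizerParams.1 hq) hx)
    · rw [hcard, Set.toFinset_card, ← Nat.card_eq_fintype_card, SetLike.coe_sort_coe,
        card_mul_card_dotOrthogonal]
      simp
  exact Finset.mem_image.1 (himage ▸ Set.mem_toFinset.2 ha)

end Pauli

open Classical in
theorem exists_stabilizer_mapping_general {n : ℕ} (ψ : (Fin n → ZMod 2) → ℂ)
    (hcard : (Finset.univ.filter fun q : PauliParam n => PauliOp' q *ᵥ ψ = ψ).card = 2 ^ n)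
    (x y : Fin n → ZMod 2) (hx : ψ x ≠ 0) (hy : ψ y ≠ 0) :
    ∃ (α β : ZMod 2) (a b : Fin n → ZMod 2) (c : ℂ), c ≠ 0 ∧
      PauliOp α β a b *ᵥ ψ = ψ ∧ PauliOp α β a b *ᵥ ket x = c • ket y := by
  have hyx : y -ᵥ x ∈ vectorSpan (ZMod 2) (Function.support ψ) :=
    vsub_mem_vectorSpan (ZMod 2) (Function.mem_support.2 hy) (Function.mem_support.2 hx)
  obtain ⟨⟨α, β, a, b⟩, hq, rfl⟩ := exists_mem_stabilizerParams_of_mem_vectorSpan hcard hx hyx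
  refine ⟨α, β, y -ᵥ x, b, pauliPhase α β * (-1) ^ (b ⬝ᵥ x).val,
    mul_ne_zero (pauliPhase_ne_zero α β) (pow_ne_zero _ (by norm_num)),
    mem_stabilizerParams.1 hq, ?_⟩
  rw [pauliOp_mulVec_ket, vsub_eq_sub, add_sub_cancel]

open Classical in
/-- If `ψ` is an `n`-qubit stabilizer state (normalized, with stabilizer group of
size `2^n`) and `x, y` satisfy `⟨x|ψ⟩ ≠ 0` and `⟨y|ψ⟩ ≠ 0`, then there is a Pauli
operator `P` stabilizing `ψ` with `P|x⟩ ∝ |y⟩`. -/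
theorem exists_stabilizer_mapping {n : ℕ} (ψ : (Fin n → ZMod 2) → ℂ)
    (hnorm : ∑ z, ‖ψ z‖ ^ 2 = 1)
    (hcard : (Finset.univ.filter fun q : PauliParam n => PauliOp' q *ᵥ ψ = ψ).card = 2 ^ n)
    (x y : Fin n → ZMod 2) (hx : ψ x ≠ 0) (hy : ψ y ≠ 0) :
    ∃ (α β : ZMod 2) (a b : Fin n → ZMod 2) (c : ℂ), c ≠ 0 ∧
      PauliOp α β a b *ᵥ ψ = ψ ∧ PauliOp α β a b *ᵥ ket x = c • ket y :=
  exists_stabilizer_mapping_general ψ hcard x y hx hy
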